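/- Let G be a finite graph, τ a threshold function, and U the vertex set of a non-bipartite component of G[{u : τ(u)=1}] on which τ ≡ 1, such that every vertex of N_G(U) has threshold equal to its degree. Let v₀v₁…v_{2k}v₀ be an odd cycle in G[U] and suppose v₀ ∈ X_ℓ in the activation process. Then v_j, v_{2k+1−j} ∈ X_{ℓ+j} for every j ∈ {1,…,k}; in particular the adjacent vertices v_k and v_{k+1} are both in X_{ℓ+k}, and hence both lie in X_t for all t ≥ ℓ+k. -/

import Mathlib

open Finset

/-- The non-monotone activation process on `(G, τ)` starting with `X`:
`X_t = {u : |N_G(u) ∩ X_{t-1}| ≥ τ(u)}` for `t ≥ 1`. -/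
def activation {V : Type*} (G : SimpleGraph V) [Fintype V] [DecidableEq V]
    [DecidableRel G.Adj] (τ : V → ℤ) (X : Finset V) : ℕ → Finset V
  | 0 => X
  | t + 1 => Finset.univ.filter
      (fun u => τ u ≤ ((G.neighborFinset u ∩ activation G τ X t).card : ℤ))

/-- `X` is a non-monotone target set for `(G, τ)`. -/
def IsTargetSet {V : Type*} (G : SimpleGraph V) [Fintype V] [DecidableEq V]
    [DecidableRel G.Adj] (τ : V → ℤ) (X : Finset V) : Prop :=
  ∃ t₀ : ℕ, ∀ t ≥ t₀, activation G τ X t = Finset.univ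

/-- Open neighbourhood of a set of vertices: `N_G(S)`. -/
def openNbhd {V : Type*} (G : SimpleGraph V) (S : Set V) : Set V :=
  {v | v ∉ S ∧ ∃ u ∈ S, G.Adj u v}

/-- Closed neighbourhood of a set of vertices: `N_G[S]`. -/
def closedNbhd {V : Type*} (G : SimpleGraph V) (S : Set V) : Set V :=
  S ∪ openNbhd G S

/-- Closed neighbourhood, as a finset. -/
def closedNbhdFinset {V : Type*} (G : SimpleGraph V) [Fintype V] [DecidableEq V]
    [DecidableRel G.Adj] (U : Finset V) : Finset V :=
  U ∪ Finset.univ.filter (fun v => ∃ u ∈ U, G.Adj u v)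

/-- `U` is the vertex set of a connected component of the subgraph of `G` induced by `S`. -/
def IsComponentOf {V : Type*} (G : SimpleGraph V) (S U : Set V) : Prop :=
  U ⊆ S ∧ U.Nonempty ∧ (G.induce U).Connected ∧
    ∀ u ∈ U, ∀ v ∈ S, G.Adj u v → v ∈ U

/-- The subgraph of `G` induced by `S`, as a graph on the subtype `S`. -/
def restrict {V : Type*} (G : SimpleGraph V) (S : Set V) : SimpleGraph S where
  Adj a b := G.Adj a b
  symm := ⟨fun _ _ h => G.adj_symm h⟩
  loopless := ⟨fun a h => G.loopless.irrefl a h⟩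

instance {V : Type*} (G : SimpleGraph V) (S : Set V) [h : DecidableRel G.Adj] :
    DecidableRel (restrict G S).Adj := fun a b => h a b

/-! A vertex of threshold `1` is active as soon as one of its neighbours was active a round
earlier. Hence activity spreads from `v₀` around the odd cycle in both directions, one edge per
round, and the two fronts reach the adjacent pair `v_k, v_{k+1}` together at time `ℓ + k`; from then
on these two vertices keep each other active. -/

section ThresholdOne

variable {V : Type*} [Fintype V] [DecidableEq V] {G : SimpleGraph V} [DecidableRel G.Adj]
  {τ : V → ℤ} {X : Finset V}

theorem mem_activation_succ_of_adj {t : ℕ} {u w : V} (hτ : τ w ≤ 1) (hadj : G.Adj u w)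
    (hu : u ∈ activation G τ X t) : w ∈ activation G τ X (t + 1) := by
  have hmem : u ∈ G.neighborFinset w ∩ activation G τ X t := by
    simp [SimpleGraph.mem_neighborFinset, hadj.symm, hu]
  have hpos : 0 < (G.neighborFinset w ∩ activation G τ X t).card := card_pos.2 ⟨u, hmem⟩
  simp only [activation, mem_filter, mem_univ, true_and]
  omega

theorem mem_activation_add_of_path {n ℓ : ℕ} {p : ℕ → V}
    (hpath : ∀ i < n, G.Adj (p i) (p (i + 1)) ∧ τ (p (i + 1)) ≤ 1)
    (hp0 : p 0 ∈ activation G τ X ℓ) : ∀ j ≤ n, p j ∈ activation G τ X (ℓ + j) := by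
  intro j hj
  induction j with
  | zero => exact hp0
  | succ j ih =>
    obtain ⟨hadj, hτ⟩ := hpath j hj
    exact mem_activation_succ_of_adj hτ hadj (ih (by omega))

theorem mem_activation_forever_of_adj {t : ℕ} {a b : V} (hadj : G.Adj a b) (ha : τ a ≤ 1)
    (hb : τ b ≤ 1) (hat : a ∈ activation G τ X t) (hbt : b ∈ activation G τ X t) :
    ∀ s ≥ t, a ∈ activation G τ X s ∧ b ∈ activation G τ X s := by
  intro s hs
  induction s, hs using Nat.le_induction with
  | base => exact ⟨hat, hbt⟩
  | succ s _ ih =>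
    exact ⟨mem_activation_succ_of_adj ha hadj.symm ih.2, mem_activation_succ_of_adj hb hadj ih.1⟩

theorem mem_activation_of_odd_cycle {k ℓ : ℕ} {v : ℕ → V}
    (hτ : ∀ i ≤ 2 * k, τ (v i) ≤ 1) (hcyc : ∀ i < 2 * k, G.Adj (v i) (v (i + 1)))
    (hcyc' : G.Adj (v (2 * k)) (v 0)) (hv0 : v 0 ∈ activation G τ X ℓ) (j : ℕ) (hj1 : 1 ≤ j)
    (hj : j ≤ k) :
    v j ∈ activation G τ X (ℓ + j) ∧ v (2 * k + 1 - j) ∈ activation G τ X (ℓ + j) := by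
  have hforward : ∀ j ≤ k, v j ∈ activation G τ X (ℓ + j) :=
    mem_activation_add_of_path (n := k)
      (fun i hi => ⟨hcyc i (by omega), hτ (i + 1) (by omega)⟩) hv0
  -- the cycle read backwards from `v 0`: `v 0, v (2k), v (2k - 1), …`
  set w : ℕ → V := fun i => if i = 0 then v 0 else v (2 * k + 1 - i) with hw
  have hbackward : ∀ j ≤ k, w j ∈ activation G τ X (ℓ + j) := by
    refine mem_activation_add_of_path (fun i hi => ?_) hv0
    have hwi : w (i + 1) = v (2 * k - i) := by
      simp only [hw, Nat.add_one_ne_zero, if_false]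
      congr 1
      omega
    refine ⟨?_, hwi ▸ hτ _ (by omega)⟩
    rcases Nat.eq_zero_or_pos i with rfl | hi0
    · simpa [hw] using hcyc'.symm
    · have hadj := hcyc (2 * k - i) (by omega)
      rw [show 2 * k - i + 1 = 2 * k + 1 - i by omega] at hadj
      simpa [hw, hi0.ne', hwi] using hadj.symm
  refine ⟨hforward j hj, ?_⟩
  simpa [hw, Nat.one_le_iff_ne_zero.1 hj1] using hbackward j hj

end ThresholdOne

theorem stmt_14_general {V : Type*} [Fintype V] [DecidableEq V] (G : SimpleGraph V)
    [DecidableRel G.Adj] (τ : V → ℤ) (X₀ : Finset V) (U : Set V)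
    (hcomp : IsComponentOf G {u | τ u = 1} U)
    (k ℓ : ℕ) (v : ℕ → V)
    (hvU : ∀ i ≤ 2 * k, v i ∈ U)
    (hcyc : ∀ i < 2 * k, G.Adj (v i) (v (i + 1)))
    (hcyc' : G.Adj (v (2 * k)) (v 0))
    (hv0 : v 0 ∈ activation G τ X₀ ℓ) :
    (∀ j : ℕ, 1 ≤ j → j ≤ k →
      v j ∈ activation G τ X₀ (ℓ + j) ∧ v (2 * k + 1 - j) ∈ activation G τ X₀ (ℓ + j)) ∧
    (∀ t ≥ ℓ + k, v k ∈ activation G τ X₀ t ∧ v (k + 1) ∈ activation G τ X₀ t) := by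
  have hτ : ∀ i ≤ 2 * k, τ (v i) ≤ 1 := fun i hi => (hcomp.1 (hvU i hi)).le
  have hspread := mem_activation_of_odd_cycle hτ hcyc hcyc' hv0
  refine ⟨hspread, ?_⟩
  have hk : 1 ≤ k := Nat.one_le_iff_ne_zero.2 fun hk0 => by
    subst hk0; exact G.loopless.irrefl _ hcyc'
  have hmiddle := hspread k hk le_rfl
  rw [show 2 * k + 1 - k = k + 1 by omega] at hmiddle
  exact mem_activation_forever_of_adj (hcyc k (by omega)) (hτ k (by omega)) (hτ (k + 1) (by omega))
    hmiddle.1 hmiddle.2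

theorem stmt_14 {V : Type*} [Fintype V] [DecidableEq V] (G : SimpleGraph V)
    [DecidableRel G.Adj] (τ : V → ℤ) (X₀ : Finset V) (U : Set V)
    (hcomp : IsComponentOf G {u | τ u = 1} U)
    (hnonbip : ¬ (restrict G U).Colorable 2)
    (hN : ∀ w ∈ openNbhd G U, τ w = (G.degree w : ℤ))
    (k ℓ : ℕ) (v : ℕ → V)
    (hvU : ∀ i ≤ 2 * k, v i ∈ U)
    (hcyc : ∀ i < 2 * k, G.Adj (v i) (v (i + 1)))
    (hcyc' : G.Adj (v (2 * k)) (v 0))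
    (hv0 : v 0 ∈ activation G τ X₀ ℓ) :
    (∀ j : ℕ, 1 ≤ j → j ≤ k →
      v j ∈ activation G τ X₀ (ℓ + j) ∧ v (2 * k + 1 - j) ∈ activation G τ X₀ (ℓ + j)) ∧
    (∀ t ≥ ℓ + k, v k ∈ activation G τ X₀ t ∧ v (k + 1) ∈ activation G τ X₀ t) :=
  stmt_14_general G τ X₀ U hcomp k ℓ v hvU hcyc hcyc' hv0
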